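/- arXiv:2207.04605 — 6 statements merged into one kernel-verified Lean document; each statement's English description precedes it below -/
import Mathlib

section
/- Under Assumption 1, let ε ∈ {1, −1} be the constant value of n_y(f) on R and let g : R → I be the unique continuous function with f(x, g(x)) = 0 on R. Then for every compact subrectangle R′ ⊆ R, ∬_{R′×I} Θ_y f(x,y) dx dy = ((ε+1)/2)·|R′|·M₀ + ((ε−1)/2)·|R′|·m₀ − ε·∫_{R′} g(x) dx, where |R′| denotes the Lebesgue measure of R′. -/
/-!
For fixed `x`, the sign hypotheses together with `f x (g x) = 0` force the jump point `y₀ x` to be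
`g x`, so `Θ_y f (x, ·)` is the indicator of `[g x, M₀]` (if `ε = 1`) or of `[m₀, g x]`
(if `ε = -1`) inside `[m₀, M₀]`. Its integral over `[m₀, M₀]` is therefore
`(ε+1)/2·M₀ + (ε−1)/2·m₀ − ε·g x` in both cases, and Fubini integrates this over `R'`.
-/

open Set MeasureTheory

theorem nonneg_iff_le_of_sign_change {α : Type*} [LinearOrder α] {S : Set α} {φ : α → ℝ}
    {y₀ c : α} (hneg : ∀ y ∈ S, y < y₀ → φ y < 0) (hpos : ∀ y ∈ S, y₀ < y → 0 < φ y)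
    (hc : c ∈ S) (hφc : φ c = 0) {y : α} (hy : y ∈ S) : 0 ≤ φ y ↔ c ≤ y := by
  have hy₀ : y₀ = c := by
    rcases lt_trichotomy y₀ c with h | h | h
    · exact absurd hφc (hpos c hc h).ne'
    · exact h
    · exact absurd hφc (hneg c hc h).ne
  subst hy₀
  constructor
  · exact fun h => not_lt.mp fun hlt => (hneg y hy hlt).not_ge h
  · intro hle
    rcases hle.eq_or_lt with rfl | hlt
    · exact hφc.ge
    · exact (hpos y hy hlt).le

theorem nonneg_iff_ge_of_sign_change {α : Type*} [LinearOrder α] {S : Set α} {φ : α → ℝ}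
    {y₀ c : α} (hpos : ∀ y ∈ S, y < y₀ → 0 < φ y) (hneg : ∀ y ∈ S, y₀ < y → φ y < 0)
    (hc : c ∈ S) (hφc : φ c = 0) {y : α} (hy : y ∈ S) : 0 ≤ φ y ↔ y ≤ c :=
  nonneg_iff_le_of_sign_change (α := αᵒᵈ) hneg hpos hc hφc hy

theorem setIntegral_ite_eq_measureReal {α : Type*} [MeasurableSpace α] {μ : Measure α}
    {s t : Set α} {p : α → Prop} [DecidablePred p] (hs : MeasurableSet s) (ht : MeasurableSet t)
    (hts : t ⊆ s) (hp : ∀ y ∈ s, p y ↔ y ∈ t) :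
    ∫ y in s, (if p y then (1 : ℝ) else 0) ∂μ = μ.real t := by
  have hind : EqOn (fun y => if p y then (1 : ℝ) else 0) (t.indicator 1) s := fun y hy => by
    by_cases h : p y <;> simp [h, ← hp y hy]
  rw [setIntegral_congr_fun hs hind, integral_indicator_one ht, measureReal_restrict_apply ht,
    inter_eq_left.mpr hts]

theorem setIntegral_Icc_ite_nonneg_of_sign_change {φ : ℝ → ℝ} {m M y₀ c ε : ℝ}
    (hε : (ε = 1 ∧ (∀ y ∈ Icc m M, y < y₀ → φ y < 0) ∧ (∀ y ∈ Icc m M, y₀ < y → 0 < φ y)) ∨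
      (ε = -1 ∧ (∀ y ∈ Icc m M, y < y₀ → 0 < φ y) ∧ (∀ y ∈ Icc m M, y₀ < y → φ y < 0)))
    (hc : c ∈ Icc m M) (hφc : φ c = 0) :
    ∫ y in Icc m M, (if 0 ≤ φ y then (1 : ℝ) else 0) =
      (ε + 1) / 2 * M + (ε - 1) / 2 * m - ε * c := by
  rcases hε with ⟨rfl, hneg, hpos⟩ | ⟨rfl, hpos, hneg⟩
  · rw [setIntegral_ite_eq_measureReal measurableSet_Icc measurableSet_Icc
      (Icc_subset_Icc_left hc.1) fun y hy => ?_, Real.volume_real_Icc_of_le hc.2]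
    · ring
    · simp only [nonneg_iff_le_of_sign_change hneg hpos hc hφc hy, mem_Icc, hy.2, and_true]
  · rw [setIntegral_ite_eq_measureReal measurableSet_Icc measurableSet_Icc
      (Icc_subset_Icc_right hc.2) fun y hy => ?_, Real.volume_real_Icc_of_le hc.1]
    · ring
    · simp only [nonneg_iff_ge_of_sign_change hpos hneg hc hφc hy, mem_Icc, hy.1, true_and]

theorem statement2_general (n : ℕ) (f : (Fin n → ℝ) → ℝ → ℝ)
    (hf : Continuous fun p : (Fin n → ℝ) × ℝ => f p.1 p.2)
    (ξ η : Fin n → ℝ)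
    (m₀ M₀ : ℝ)
    (y₀ : (Fin n → ℝ) → ℝ)
    (ε : ℝ)
    (hε : (ε = 1 ∧ ∀ x ∈ Icc ξ η,
            (∀ y ∈ Icc m₀ M₀, y < y₀ x → f x y < 0) ∧ (∀ y ∈ Icc m₀ M₀, y₀ x < y → 0 < f x y)) ∨
          (ε = -1 ∧ ∀ x ∈ Icc ξ η,
            (∀ y ∈ Icc m₀ M₀, y < y₀ x → 0 < f x y) ∧ (∀ y ∈ Icc m₀ M₀, y₀ x < y → f x y < 0)))
    (g : (Fin n → ℝ) → ℝ)
    (hgc : ContinuousOn g (Icc ξ η))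
    (hg : ∀ x ∈ Icc ξ η, g x ∈ Icc m₀ M₀ ∧ f x (g x) = 0)
    (ξ' η' : Fin n → ℝ) (hsub : Icc ξ' η' ⊆ Icc ξ η) :
    ∫ p in Icc ξ' η' ×ˢ Icc m₀ M₀, (if 0 ≤ f p.1 p.2 then (1 : ℝ) else 0) =
      (ε + 1) / 2 * (volume (Icc ξ' η')).toReal * M₀ +
        (ε - 1) / 2 * (volume (Icc ξ' η')).toReal * m₀ -
        ε * ∫ x in Icc ξ' η', g x := by
  have hΘ : IntegrableOn (fun p : (Fin n → ℝ) × ℝ => if 0 ≤ f p.1 p.2 then (1 : ℝ) else 0)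
      (Icc ξ' η' ×ˢ Icc m₀ M₀) := by
    refine Measure.integrableOn_of_bounded (M := 1)
      (isCompact_Icc.prod isCompact_Icc).measure_ne_top ?_ ?_
    · exact (Measurable.ite (isClosed_le continuous_const hf).measurableSet
        measurable_const measurable_const).aestronglyMeasurable
    · exact Filter.Eventually.of_forall fun p => by split_ifs <;> norm_num
  have hsection : ∀ x ∈ Icc ξ' η', ∫ y in Icc m₀ M₀, (if 0 ≤ f x y then (1 : ℝ) else 0) =
      (ε + 1) / 2 * M₀ + (ε - 1) / 2 * m₀ - ε * g x := fun x hx =>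
    setIntegral_Icc_ite_nonneg_of_sign_change
      (hε.imp (fun h => ⟨h.1, h.2 x (hsub hx)⟩) fun h => ⟨h.1, h.2 x (hsub hx)⟩)
      (hg x (hsub hx)).1 (hg x (hsub hx)).2
  have hconst : IntegrableOn (fun _ => (ε + 1) / 2 * M₀ + (ε - 1) / 2 * m₀) (Icc ξ' η') :=
    integrableOn_const isCompact_Icc.measure_ne_top
  have hεg : IntegrableOn (fun x => ε * g x) (Icc ξ' η') :=
    ((hgc.mono hsub).integrableOn_compact isCompact_Icc).const_mul ε
  rw [Measure.volume_eq_prod] at hΘ ⊢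
  rw [setIntegral_prod _ hΘ, setIntegral_congr_fun measurableSet_Icc hsection,
    integral_sub hconst hεg, integral_const_mul, setIntegral_const, smul_eq_mul, measureReal_def]
  ring

/-- Under Assumption 1, with `ε ∈ {1, -1}` the constant value of `n_y(f)`
on `R` and `g : R → I` the unique continuous implicit function, for every compact
subrectangle `R' ⊆ R`,
`∬_{R'×I} Θ_y f = ((ε+1)/2)·|R'|·M₀ + ((ε−1)/2)·|R'|·m₀ − ε·∫_{R'} g`. -/
theorem statement2 (n : ℕ) (f : (Fin n → ℝ) → ℝ → ℝ)
    (hf : Continuous fun p : (Fin n → ℝ) × ℝ => f p.1 p.2)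
    (ξ η : Fin n → ℝ) (hξη : ∀ k, ξ k ≤ η k)
    (m₀ M₀ : ℝ) (hI : m₀ ≤ M₀)
    (y₀ : (Fin n → ℝ) → ℝ)
    (hA : ∀ x ∈ Icc ξ η, y₀ x ∈ Icc m₀ M₀)
    (ε : ℝ)
    (hε : (ε = 1 ∧ ∀ x ∈ Icc ξ η,
            (∀ y ∈ Icc m₀ M₀, y < y₀ x → f x y < 0) ∧ (∀ y ∈ Icc m₀ M₀, y₀ x < y → 0 < f x y)) ∨
          (ε = -1 ∧ ∀ x ∈ Icc ξ η,
            (∀ y ∈ Icc m₀ M₀, y < y₀ x → 0 < f x y) ∧ (∀ y ∈ Icc m₀ M₀, y₀ x < y → f x y < 0)))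
    (g : (Fin n → ℝ) → ℝ)
    (hgc : ContinuousOn g (Icc ξ η))
    (hg : ∀ x ∈ Icc ξ η, g x ∈ Icc m₀ M₀ ∧ f x (g x) = 0)
    (hguniq : ∀ x ∈ Icc ξ η, ∀ y ∈ Icc m₀ M₀, f x y = 0 → y = g x)
    (ξ' η' : Fin n → ℝ) (hsub : Icc ξ' η' ⊆ Icc ξ η) :
    ∫ p in Icc ξ' η' ×ˢ Icc m₀ M₀, (if 0 ≤ f p.1 p.2 then (1 : ℝ) else 0) =
      (ε + 1) / 2 * (volume (Icc ξ' η')).toReal * M₀ +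
        (ε - 1) / 2 * (volume (Icc ξ' η')).toReal * m₀ -
        ε * ∫ x in Icc ξ' η', g x :=
  statement2_general n f hf ξ η m₀ M₀ y₀ ε hε g hgc hg ξ' η' hsub
end

section
/- Under Assumption 1, let ε ∈ {1, −1} be the constant value of n_y(f) on R. The unique continuous implicit function g : R → I with f(x, g(x)) = 0 on R is given, for every x ∈ R, by the integral representation g(x) = ((1+ε)/2)·M₀ + ((1−ε)/2)·m₀ − ε·∫_I Θ_y f(x,y) dy. -/
open Set MeasureTheory

/-! The zero `g x` must be the jump point `y₀ x`, so on `I` the function `Θ_y f (x, ·)` is the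
indicator of `[g x, M₀]` when `ε = 1` and of `[m₀, g x]` when `ε = -1`. Its integral is therefore
`M₀ - g x`, resp. `g x - m₀`, and solving for `g x` gives the formula. -/

theorem eq_of_sign_change {α : Type*} [LinearOrder α] {φ : α → ℝ} {s : Set α} {c z : α}
    (hneg : ∀ y ∈ s, y < c → φ y < 0) (hpos : ∀ y ∈ s, c < y → 0 < φ y)
    (hz : z ∈ s) (hφz : φ z = 0) : z = c := by
  rcases lt_trichotomy z c with h | h | h
  · exact absurd hφz (hneg z hz h).ne
  · exact h
  · exact absurd hφz (hpos z hz h).ne'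

section
variable {φ : ℝ → ℝ} {a b c z : ℝ}

theorem setIntegral_Icc_ite_le (hc : c ∈ Icc a b) :
    ∫ y in Icc a b, (if c ≤ y then (1 : ℝ) else 0) = b - c := by
  have hind : (fun y => if c ≤ y then (1 : ℝ) else 0) = (Ici c).indicator fun _ => 1 := by
    ext y; simp [indicator_apply]
  have hinter : Icc a b ∩ Ici c = Icc c b := by
    ext y; simp only [mem_inter_iff, mem_Icc, mem_Ici]; grind
  rw [hind, setIntegral_indicator measurableSet_Ici, hinter, setIntegral_const,
    Real.volume_real_Icc_of_le hc.2, smul_eq_mul, mul_one]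

theorem setIntegral_Icc_ite_ge (hc : c ∈ Icc a b) :
    ∫ y in Icc a b, (if y ≤ c then (1 : ℝ) else 0) = c - a := by
  have hind : (fun y => if y ≤ c then (1 : ℝ) else 0) = (Iic c).indicator fun _ => 1 := by
    ext y; simp [indicator_apply]
  have hinter : Icc a b ∩ Iic c = Icc a c := by
    ext y; simp only [mem_inter_iff, mem_Icc, mem_Iic]; grind
  rw [hind, setIntegral_indicator measurableSet_Iic, hinter, setIntegral_const,
    Real.volume_real_Icc_of_le hc.1, smul_eq_mul, mul_one]

theorem setIntegral_Icc_ite_nonneg_of_neg_of_pos (hneg : ∀ y ∈ Icc a b, y < c → φ y < 0)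
    (hpos : ∀ y ∈ Icc a b, c < y → 0 < φ y) (hz : z ∈ Icc a b) (hφz : φ z = 0) :
    ∫ y in Icc a b, (if 0 ≤ φ y then (1 : ℝ) else 0) = b - z := by
  obtain rfl := eq_of_sign_change hneg hpos hz hφz
  rw [← setIntegral_Icc_ite_le hz]
  refine setIntegral_congr_fun measurableSet_Icc fun y hy =>
    if_congr ⟨fun h => ?_, fun h => ?_⟩ rfl rfl
  · exact not_lt.1 fun hyz => (hneg y hy hyz).not_ge h
  · rcases h.eq_or_lt with rfl | h
    exacts [hφz.ge, (hpos y hy h).le]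

theorem setIntegral_Icc_ite_nonneg_of_pos_of_neg (hpos : ∀ y ∈ Icc a b, y < c → 0 < φ y)
    (hneg : ∀ y ∈ Icc a b, c < y → φ y < 0) (hz : z ∈ Icc a b) (hφz : φ z = 0) :
    ∫ y in Icc a b, (if 0 ≤ φ y then (1 : ℝ) else 0) = z - a := by
  obtain rfl := eq_of_sign_change (φ := -φ) (fun y hy h => neg_neg_of_pos (hpos y hy h))
    (fun y hy h => neg_pos_of_neg (hneg y hy h)) hz (by simp [hφz])
  rw [← setIntegral_Icc_ite_ge hz]
  refine setIntegral_congr_fun measurableSet_Icc fun y hy =>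
    if_congr ⟨fun h => ?_, fun h => ?_⟩ rfl rfl
  · exact not_lt.1 fun hzy => (hneg y hy hzy).not_ge h
  · rcases h.eq_or_lt with rfl | h
    exacts [hφz.ge, (hpos y hy h).le]

end

theorem statement3_general (n : ℕ) (f : (Fin n → ℝ) → ℝ → ℝ)
    (ξ η : Fin n → ℝ)
    (m₀ M₀ : ℝ)
    (y₀ : (Fin n → ℝ) → ℝ)
    (ε : ℝ)
    (hε : (ε = 1 ∧ ∀ x ∈ Icc ξ η,
            (∀ y ∈ Icc m₀ M₀, y < y₀ x → f x y < 0) ∧ (∀ y ∈ Icc m₀ M₀, y₀ x < y → 0 < f x y)) ∨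
          (ε = -1 ∧ ∀ x ∈ Icc ξ η,
            (∀ y ∈ Icc m₀ M₀, y < y₀ x → 0 < f x y) ∧ (∀ y ∈ Icc m₀ M₀, y₀ x < y → f x y < 0)))
    (g : (Fin n → ℝ) → ℝ)
    (hg : ∀ x ∈ Icc ξ η, g x ∈ Icc m₀ M₀ ∧ f x (g x) = 0) :
    ∀ x ∈ Icc ξ η,
      g x = (1 + ε) / 2 * M₀ + (1 - ε) / 2 * m₀ -
        ε * ∫ y in Icc m₀ M₀, (if 0 ≤ f x y then (1 : ℝ) else 0) := by
  intro x hx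
  obtain ⟨hgI, hfg⟩ := hg x hx
  rcases hε with ⟨rfl, h⟩ | ⟨rfl, h⟩
  · rw [setIntegral_Icc_ite_nonneg_of_neg_of_pos (h x hx).1 (h x hx).2 hgI hfg]
    ring
  · rw [setIntegral_Icc_ite_nonneg_of_pos_of_neg (h x hx).1 (h x hx).2 hgI hfg]
    ring

/-- Under Assumption 1, with `ε ∈ {1, -1}` the constant value of
`n_y(f)` on `R`, the unique continuous implicit function `g : R → I` with
`f (x, g x) = 0` on `R` satisfies, for every `x ∈ R`,
`g x = ((1+ε)/2)·M₀ + ((1−ε)/2)·m₀ − ε·∫_I Θ_y f (x, y) dy`. -/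
theorem statement3 (n : ℕ) (f : (Fin n → ℝ) → ℝ → ℝ)
    (hf : Continuous fun p : (Fin n → ℝ) × ℝ => f p.1 p.2)
    (ξ η : Fin n → ℝ) (hξη : ∀ k, ξ k ≤ η k)
    (m₀ M₀ : ℝ) (hI : m₀ ≤ M₀)
    (y₀ : (Fin n → ℝ) → ℝ)
    (hA : ∀ x ∈ Icc ξ η, y₀ x ∈ Icc m₀ M₀)
    (ε : ℝ)
    (hε : (ε = 1 ∧ ∀ x ∈ Icc ξ η,
            (∀ y ∈ Icc m₀ M₀, y < y₀ x → f x y < 0) ∧ (∀ y ∈ Icc m₀ M₀, y₀ x < y → 0 < f x y)) ∨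
          (ε = -1 ∧ ∀ x ∈ Icc ξ η,
            (∀ y ∈ Icc m₀ M₀, y < y₀ x → 0 < f x y) ∧ (∀ y ∈ Icc m₀ M₀, y₀ x < y → f x y < 0)))
    (g : (Fin n → ℝ) → ℝ)
    (hgc : ContinuousOn g (Icc ξ η))
    (hg : ∀ x ∈ Icc ξ η, g x ∈ Icc m₀ M₀ ∧ f x (g x) = 0)
    (hguniq : ∀ x ∈ Icc ξ η, ∀ y ∈ Icc m₀ M₀, f x y = 0 → y = g x) :
    ∀ x ∈ Icc ξ η,
      g x = (1 + ε) / 2 * M₀ + (1 - ε) / 2 * m₀ -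
        ε * ∫ y in Icc m₀ M₀, (if 0 ≤ f x y then (1 : ℝ) else 0) :=
  statement3_general n f ξ η m₀ M₀ y₀ ε hε g hg
end

section
/- The determinant of V_N equals ∏_{0≤i<j≤N} (j−i)Δ (that is, Δ^{N(N+1)/2}·∏_{0≤i<j≤N}(j−i)); in particular det V_N is strictly positive, does not depend on the point a, and V_N is invertible. -/
/-! `V_N` is built from the Vandermonde matrix of the equally spaced nodes `ξ - a + iΔ`,
`0 ≤ i ≤ N`, by differencing consecutive rows and deleting the first row and column, so its
determinant is the Vandermonde determinant `∏_{i<j} (j - i)Δ` of these nodes. -/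

open Finset

theorem Fin.prod_univ_prod_Ioi_eq_prod_range_prod_range {M : Type*} [CommMonoid M] {n : ℕ}
    (f : ℕ → ℕ → M) :
    ∏ i : Fin n, ∏ j ∈ Ioi i, f i j = ∏ j ∈ range n, ∏ i ∈ range j, f i j := by
  rw [Finset.prod_comm' (t' := univ) (s' := fun j => Iio j) (by simp),
    ← Fin.prod_univ_eq_prod_range (fun j => ∏ i ∈ range j, f i j)]
  refine prod_congr rfl fun j _ => ?_
  rw [← Nat.Iio_eq_range, ← Fin.map_valEmbedding_Iio, prod_map]
  rfl

namespace Matrix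

variable {R : Type*} [CommRing R] {n : ℕ}

def powIncrement (x : Fin (n + 1) → R) : Matrix (Fin n) (Fin n) R :=
  of fun α j => x α.succ ^ ((j : ℕ) + 1) - x α.castSucc ^ ((j : ℕ) + 1)

/-- Subtracting from each row of the Vandermonde matrix the previous one leaves `e₀` as its
first column, and the minor of its top-left entry is `powIncrement x`. -/
theorem det_powIncrement (x : Fin (n + 1) → R) :
    (powIncrement x).det = (vandermonde x).det := by
  let B : Matrix (Fin (n + 1)) (Fin (n + 1)) R := of fun i j =>
    Fin.cases (x 0 ^ (j : ℕ)) (fun α => x α.succ ^ (j : ℕ) - x α.castSucc ^ (j : ℕ)) i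
  have hB : (vandermonde x).det = B.det :=
    det_eq_of_forall_row_eq_smul_add_pred (fun _ => 1) (fun j => by simp [B])
      (fun i j => by simp [B, vandermonde_apply])
  have hB_col_zero : ∀ i, B i 0 = if i = 0 then 1 else 0 := fun i => by
    cases i using Fin.cases <;> simp [B, Fin.succ_ne_zero]
  have hB_minor : B.submatrix (Fin.succAbove 0) Fin.succ = powIncrement x :=
    rfl
  rw [hB, det_succ_column_zero, sum_eq_single 0 (fun i _ hi => by simp [hB_col_zero, hi])
    (by simp), hB_col_zero, hB_minor]
  simp

theorem det_vandermonde_add_mul (c d : R) :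
    (vandermonde fun i : Fin n => c + i * d).det =
      ∏ j ∈ range n, ∏ i ∈ range j, (((j : R) - i) * d) := by
  rw [det_vandermonde, ← Fin.prod_univ_prod_Ioi_eq_prod_range_prod_range]
  refine prod_congr rfl fun i _ => prod_congr rfl fun j _ => ?_
  ring

end Matrix

open Matrix in
/-- The determinant of `V_N` equals `∏_{0 ≤ i < j ≤ N} (j−i)Δ`;
in particular it is strictly positive, does not depend on the point `a`
(the right-hand side does not involve `a`), and `V_N` is invertible. -/
theorem statement4 (ξ η : ℝ) (hξη : ξ < η) (N : ℕ) (hN : 0 < N) (a : ℝ)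
    (V : Matrix (Fin N) (Fin N) ℝ)
    (hV : ∀ α j : Fin N,
      V α j = (ξ + ((α : ℕ) + 1) * ((η - ξ) / N) - a) ^ ((j : ℕ) + 1) -
        (ξ + (α : ℕ) * ((η - ξ) / N) - a) ^ ((j : ℕ) + 1)) :
    V.det = (∏ j ∈ Finset.range (N + 1), ∏ i ∈ Finset.range j, (((j : ℝ) - (i : ℝ)) * ((η - ξ) / N)))
      ∧ 0 < V.det ∧ IsUnit V := by
  set Δ := (η - ξ) / N
  have hΔ : 0 < Δ := div_pos (sub_pos.mpr hξη) (Nat.cast_pos.mpr hN)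
  have hV_eq : V = powIncrement fun i : Fin (N + 1) => (ξ - a) + i * Δ := by
    ext α j
    rw [hV, powIncrement, of_apply, Fin.val_succ, Fin.val_castSucc]
    push_cast
    ring_nf
  have hdet : V.det = ∏ j ∈ range (N + 1), ∏ i ∈ range j, (((j : ℝ) - i) * Δ) := by
    rw [hV_eq, det_powIncrement, det_vandermonde_add_mul]
  have hpos : 0 < V.det := by
    rw [hdet]
    refine prod_pos fun j _ => prod_pos fun i hi => mul_pos ?_ hΔ
    exact sub_pos.mpr (Nat.cast_lt.mpr (mem_range.mp hi))
  exact ⟨hdet, hpos, (isUnit_iff_isUnit_det V).mpr hpos.ne'.isUnit⟩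
end

section
/- Let g : R → ℝ be a multivariate polynomial of the form g(x) = Σ_{0≤β<N} c_β (x−a)^β (so the degree of g in x_k is less than N_k for each k), and set d_α = ∫_{R_α} g(x) dx for each grid multi-index α. Then the coefficient family (c_β)_{0≤β<N} is the unique solution of the linear system Σ_{0≤β<N} c_β ∏_{k=1}^n [ ((ξ_k + α_kΔ_k − a_k)^{β_k+1} − (ξ_k + (α_k−1)Δ_k − a_k)^{β_k+1}) / (β_k+1) ] = d_α over all 1 ≤ α ≤ N. In particular, the linear map sending a coefficient family (c_β)_{0≤β<N} to the family of block integrals ( ∫_{R_α} Σ_β c_β (x−a)^β dx )_{1≤α≤N} is bijective, so g is uniquely determined by its block integrals (d_α). -/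
/-!
The integral of a monomial `(x - a)^β` over a grid block factors into one-dimensional integrals,
so the map from coefficients to block integrals is `c ↦ c ᵥ* A` with `A` the Kronecker product of
one-dimensional moment matrices. A Kronecker product of injective matrices is injective, and each
one-dimensional factor is injective: if `Σ_β c_β (x - a)^β` integrates to zero over each of the
`N` cells of a grid, its antiderivative, of degree at most `N`, takes equal values at the `N + 1`
grid nodes, hence is constant, and all `c_β` vanish. An injective square matrix is invertible.
-/

open Set MeasureTheory

open Matrix

theorem setIntegral_Icc_sub_pow {l u : ℝ} (h : l ≤ u) (a : ℝ) (m : ℕ) :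
    ∫ x in Icc l u, (x - a) ^ m = ((u - a) ^ (m + 1) - (l - a) ^ (m + 1)) / ((m : ℝ) + 1) := by
  rw [integral_Icc_eq_integral_Ioc, ← intervalIntegral.integral_of_le h,
    intervalIntegral.integral_comp_sub_right (· ^ m), integral_pow]

theorem setIntegral_Icc_pi_prod {ι 𝕜 : Type*} [Fintype ι] [RCLike 𝕜] (f : ι → ℝ → 𝕜)
    (l u : ι → ℝ) :
    ∫ x in Icc l u, ∏ k, f k (x k) = ∏ k, ∫ x in Icc (l k) (u k), f k x := by
  rw [← pi_univ_Icc, volume_pi, Measure.restrict_pi_pi, integral_fintype_prod_eq_prod]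

theorem setIntegral_Icc_sum_mul_prod_sub_pow {ι : Type*} [Fintype ι] [DecidableEq ι]
    {N : ι → ℕ} {l u : ι → ℝ} (hlu : l ≤ u) (a : ι → ℝ) (c : (∀ k, Fin (N k)) → ℝ) :
    ∫ x in Icc l u, ∑ β : ∀ k, Fin (N k), c β * ∏ k, (x k - a k) ^ (β k : ℕ) =
      ∑ β : ∀ k, Fin (N k), c β *
        ∏ k, ((u k - a k) ^ ((β k : ℕ) + 1) - (l k - a k) ^ ((β k : ℕ) + 1)) / ((β k : ℕ) + 1) := by
  rw [integral_finsetSum _ fun β _ => ?_]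
  · refine Finset.sum_congr rfl fun β _ => ?_
    rw [integral_const_mul, setIntegral_Icc_pi_prod (fun k x => (x - a k) ^ (β k : ℕ))]
    simp only [setIntegral_Icc_sub_pow (hlu _)]
  · exact Continuous.integrableOn_Icc (by fun_prop)

section KroneckerPi

variable {R : Type*} [CommSemiring R]

def kroneckerPi {n : ℕ} {m p : Fin n → Type*} (M : ∀ k, Matrix (m k) (p k) R) :
    Matrix (∀ k, m k) (∀ k, p k) R :=
  of fun β α => ∏ k, M k (β k) (α k)

theorem vecMul_kroneckerPi_cons {n : ℕ} {m p : Fin (n + 1) → Type*} [∀ k, Fintype (m k)]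
    (M : ∀ k, Matrix (m k) (p k) R) (v : (∀ k, m k) → R) (α₀ : p 0) (α : ∀ k, p (Fin.succ k)) :
    (v ᵥ* kroneckerPi M) (Fin.cons α₀ α) =
      ((fun β₀ => ((fun β => v (Fin.cons β₀ β)) ᵥ* kroneckerPi fun k => M k.succ) α) ᵥ* M 0)
        α₀ := by
  simp only [vecMul, dotProduct, kroneckerPi, of_apply, Finset.sum_mul]
  rw [← (Fin.consEquiv m).sum_comp, Fintype.sum_prod_type]
  refine Finset.sum_congr rfl fun β₀ _ => Finset.sum_congr rfl fun β _ => ?_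
  simp only [Fin.consEquiv, Equiv.coe_fn_mk, Fin.prod_univ_succ, Fin.cons_zero, Fin.cons_succ]
  ring

theorem vecMul_kroneckerPi_injective {n : ℕ} {m p : Fin n → Type*} [∀ k, Fintype (m k)]
    (M : ∀ k, Matrix (m k) (p k) R) (hM : ∀ k, Function.Injective (M k).vecMul) :
    Function.Injective (kroneckerPi M).vecMul := by
  induction n with
  | zero =>
    intro v w hvw
    funext β
    simpa [vecMul, dotProduct, kroneckerPi, Subsingleton.elim _ β] using congrFun hvw isEmptyElim
  | succ n ih =>
    intro v w hvw
    have h_slices : ∀ α,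
        (fun β₀ => ((fun β => v (Fin.cons β₀ β)) ᵥ* kroneckerPi fun k => M k.succ) α) =
          (fun β₀ => ((fun β => w (Fin.cons β₀ β)) ᵥ* kroneckerPi fun k => M k.succ) α) := by
      intro α
      refine hM 0 (funext fun α₀ => ?_)
      dsimp only
      rw [← vecMul_kroneckerPi_cons, ← vecMul_kroneckerPi_cons]
      exact congrFun hvw _
    funext β
    rw [← Fin.cons_self_tail β]
    exact congrFun (ih _ (fun k => hM k.succ) (funext fun α => congrFun (h_slices α) (β 0))) _

end KroneckerPi

section GridMomentMatrix

open Polynomial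

variable {K : Type*} [Field K]

/-- Entry `(β, α)` is `∫ (x - a)^β` over the cell `[ξ + αΔ, ξ + (α+1)Δ]`; rows are indexed by
exponents, so `c ᵥ* gridMomentMatrix ξ Δ a N` lists the cell integrals of `Σ_β c_β (x - a)^β`. -/
def gridMomentMatrix (ξ Δ a : K) (N : ℕ) : Matrix (Fin N) (Fin N) K :=
  of fun β α =>
    ((ξ + ((α : ℕ) + 1) * Δ - a) ^ ((β : ℕ) + 1) - (ξ + (α : ℕ) * Δ - a) ^ ((β : ℕ) + 1)) /
      ((β : ℕ) + 1)

variable [CharZero K]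

theorem eq_zero_of_vecMul_gridMomentMatrix_eq_zero {ξ Δ a : K} (hΔ : Δ ≠ 0) {N : ℕ}
    {u : Fin N → K} (hu : u ᵥ* gridMomentMatrix ξ Δ a N = 0) : u = 0 := by
  let s : ℕ → K := fun i => ξ + i * Δ - a
  let Q : K[X] := ∑ β : Fin N, C (u β / ((β : ℕ) + 1)) * X ^ ((β : ℕ) + 1)
  have hQ_step : ∀ α : Fin N, Q.eval (s (α + 1)) = Q.eval (s α) := by
    intro α
    have hα := congrFun hu α
    simp only [vecMul, dotProduct, gridMomentMatrix, of_apply, Pi.zero_apply] at hα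
    simp only [Q, eval_finsetSum, eval_mul, eval_C, eval_pow, eval_X, s]
    rw [← sub_eq_zero, ← Finset.sum_sub_distrib, ← hα]
    push_cast
    exact Finset.sum_congr rfl fun β _ => by ring
  have hQ_nodes : ∀ i ≤ N, Q.eval (s i) = Q.eval (s 0) := by
    intro i hi
    induction i with
    | zero => rfl
    | succ i ih => rw [← ih (by omega)]; exact hQ_step ⟨i, hi⟩
  have hQ_deg : (Q - C (Q.eval (s 0))).degree < (Finset.range (N + 1)).card := by
    rw [Finset.card_range]
    refine (degree_sub_le _ _).trans_lt (max_lt ?_ (degree_C_le.trans_lt ?_))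
    · refine (degree_sum_le _ _).trans_lt ((Finset.sup_lt_iff (WithBot.bot_lt_coe _)).2 ?_)
      exact fun β _ => (degree_C_mul_X_pow_le _ _).trans_lt
        (by exact_mod_cast Nat.succ_lt_succ β.isLt)
    · exact_mod_cast N.succ_pos
  have hQ_const : Q = C (Q.eval (s 0)) := by
    refine eq_of_degree_sub_lt_of_eval_index_eq (v := s) _ ?_ hQ_deg ?_
    · intro i _ j _ hij
      simpa [s, hΔ] using hij
    · intro i hi
      rw [eval_C, hQ_nodes i (Finset.mem_range_succ_iff.1 hi)]
  funext β
  simpa [Q, Fin.val_inj, Nat.cast_add_one_ne_zero] using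
    congrArg (coeff · ((β : ℕ) + 1)) hQ_const

theorem vecMul_gridMomentMatrix_injective {ξ Δ a : K} (hΔ : Δ ≠ 0) (N : ℕ) :
    Function.Injective (gridMomentMatrix ξ Δ a N).vecMul := fun v w hvw =>
  sub_eq_zero.1 <| eq_zero_of_vecMul_gridMomentMatrix_eq_zero hΔ <| by
    rw [sub_vecMul]; exact sub_eq_zero.2 hvw

end GridMomentMatrix

/-- For a multivariate polynomial `g x = Σ_{0 ≤ β < N} c β (x−a)^β`,
the coefficient family `(c β)` is the unique solution of the linear system
`Σ_β c β ∏_k ((ξ_k + α_kΔ_k − a_k)^{β_k+1} − (ξ_k + (α_k−1)Δ_k − a_k)^{β_k+1})/(β_k+1) = d α`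
where `d α = ∫_{R_α} g`; in particular the linear map sending a coefficient family to the
family of its block integrals is bijective. -/
theorem statement5 (n : ℕ) (Nn : Fin n → ℕ) (hNn : ∀ k, 0 < Nn k)
    (ξ η : Fin n → ℝ) (hξη : ∀ k, ξ k < η k) (a : Fin n → ℝ)
    (c : ((k : Fin n) → Fin (Nn k)) → ℝ)
    (g : (Fin n → ℝ) → ℝ)
    (hg : ∀ x, g x = ∑ β : (k : Fin n) → Fin (Nn k), c β * ∏ k, (x k - a k) ^ ((β k : ℕ)))
    (d : ((k : Fin n) → Fin (Nn k)) → ℝ)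
    (hd : ∀ α : (k : Fin n) → Fin (Nn k),
      d α = ∫ x in Icc (fun k => ξ k + ((α k : ℕ) : ℝ) * ((η k - ξ k) / (Nn k : ℝ)))
          (fun k => ξ k + (((α k : ℕ) : ℝ) + 1) * ((η k - ξ k) / (Nn k : ℝ))), g x) :
    (∀ α : (k : Fin n) → Fin (Nn k),
      ∑ β : (k : Fin n) → Fin (Nn k), c β *
        ∏ k, (((ξ k + (((α k : ℕ) : ℝ) + 1) * ((η k - ξ k) / (Nn k : ℝ)) - a k) ^ ((β k : ℕ) + 1) -
            (ξ k + ((α k : ℕ) : ℝ) * ((η k - ξ k) / (Nn k : ℝ)) - a k) ^ ((β k : ℕ) + 1)) /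
          (((β k : ℕ) : ℝ) + 1)) = d α) ∧
    (∀ c' : ((k : Fin n) → Fin (Nn k)) → ℝ,
      (∀ α : (k : Fin n) → Fin (Nn k),
        ∑ β : (k : Fin n) → Fin (Nn k), c' β *
          ∏ k, (((ξ k + (((α k : ℕ) : ℝ) + 1) * ((η k - ξ k) / (Nn k : ℝ)) - a k) ^ ((β k : ℕ) + 1) -
              (ξ k + ((α k : ℕ) : ℝ) * ((η k - ξ k) / (Nn k : ℝ)) - a k) ^ ((β k : ℕ) + 1)) /
            (((β k : ℕ) : ℝ) + 1)) = d α) → c' = c) ∧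
    Function.Bijective (fun (c' : ((k : Fin n) → Fin (Nn k)) → ℝ) (α : (k : Fin n) → Fin (Nn k)) =>
      ∫ x in Icc (fun k => ξ k + ((α k : ℕ) : ℝ) * ((η k - ξ k) / (Nn k : ℝ)))
          (fun k => ξ k + (((α k : ℕ) : ℝ) + 1) * ((η k - ξ k) / (Nn k : ℝ))),
        ∑ β : (k : Fin n) → Fin (Nn k), c' β * ∏ k, (x k - a k) ^ ((β k : ℕ))) := by
  have hΔ : ∀ k, 0 < (η k - ξ k) / (Nn k : ℝ) := fun k =>
    div_pos (sub_pos.2 (hξη k)) (Nat.cast_pos.2 (hNn k))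
  set A := kroneckerPi fun k => gridMomentMatrix (ξ k) ((η k - ξ k) / (Nn k : ℝ)) (a k) (Nn k)
  have hA : Function.Injective A.vecMul :=
    vecMul_kroneckerPi_injective _ fun k => vecMul_gridMomentMatrix_injective (hΔ k).ne' _
  have hblock : ∀ c' α, ∫ x in Icc (fun k => ξ k + ((α k : ℕ) : ℝ) * ((η k - ξ k) / (Nn k : ℝ)))
      (fun k => ξ k + (((α k : ℕ) : ℝ) + 1) * ((η k - ξ k) / (Nn k : ℝ))),
        ∑ β : (k : Fin n) → Fin (Nn k), c' β * ∏ k, (x k - a k) ^ ((β k : ℕ)) = (c' ᵥ* A) α :=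
    fun c' α => setIntegral_Icc_sum_mul_prod_sub_pow (fun k => by nlinarith [hΔ k]) a c'
  have hc : ∀ α, (c ᵥ* A) α = d α := fun α => by rw [hd, ← hblock]; simp only [hg]
  refine ⟨hc, fun c' hc' => hA (funext fun α => (hc' α).trans (hc α).symm), ?_⟩
  rw [show _ = A.vecMul from funext₂ hblock]
  exact ⟨hA, vecMul_surjective_iff_isUnit.2 (vecMul_injective_iff_isUnit.1 hA)⟩
end

section
/- Let f = (f₁,…,f_m) : ℝ^n × ℝ^m → ℝ^m be continuously differentiable near (a,b) with f(a,b) = 0, let i ∈ {1,…,m} with ∂_{y_m} f_i(a,b) ≠ 0, and let h be a continuously differentiable function of (x, y₁,…,y_{m−1}) defined near (a, b₁,…,b_{m−1}) with h(a, b₁,…,b_{m−1}) = b_m and f_i(x, y₁,…,y_{m−1}, h(x, y₁,…,y_{m−1})) = 0 identically near that point. Define f^{[1]} : ℝ^{n+m−1} → ℝ^{m−1} whose components are f_j(x, y₁,…,y_{m−1}, h(x, y₁,…,y_{m−1})) for j ∈ {1,…,m} \ {i} in increasing order of j. Then det J_{f^{[1]},(y₁,…,y_{m−1})}(a, b₁,…,b_{m−1})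 = ((−1)^{i+m} / ∂_{y_m} f_i(a,b)) · det J_{f,y}(a,b); in particular, if det J_{f,y}(a,b) ≠ 0 then det J_{f^{[1]},(y₁,…,y_{m−1})}(a, b₁,…,b_{m−1}) ≠ 0. -/
/-!
By the chain rule, column `k` of the Jacobian of `f^{[1]}` is column `k` of `J` plus `∂_k h`
times the last column of `J`, with row `i` deleted. Differentiating the constraint
`f_i(x, y', h(x, y')) = 0` shows that these column operations, which preserve `det J`, clear
row `i` except for its last entry `∂_{y_m} f_i`; Laplace expansion along row `i` then gives
`det J = (-1)^(i+m) ∂_{y_m} f_i · det J1`.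
-/

namespace Matrix

variable {R : Type*} [CommRing R] {m : ℕ}

theorem det_add_vecMulVec_col_last (J : Matrix (Fin (m + 1)) (Fin (m + 1)) R) (d : Fin m → R) :
    (J + vecMulVec (J.col (Fin.last m)) (Fin.snoc d 0)).det = J.det := by
  rw [vecMulVec_eq Unit, ← mulVec_single_one, replicateCol_mulVec, Matrix.mul_assoc,
    ← mul_one_add, det_mul, det_one_add_replicateCol_mul_replicateRow,
    dotProduct_single_one, Fin.snoc_last, add_zero, mul_one]

theorem det_eq_neg_one_pow_mul_mul_det_of_eliminate_last
    (J : Matrix (Fin (m + 1)) (Fin (m + 1)) R) (i : Fin (m + 1)) (d : Fin m → R)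
    (hrow : ∀ k, J i k.castSucc + d k * J i (Fin.last m) = 0) :
    J.det = (-1) ^ ((i : ℕ) + m) * J i (Fin.last m) *
      (of fun j k => J (i.succAbove j) k.castSucc + d k * J (i.succAbove j) (Fin.last m)).det := by
  set J' := J + vecMulVec (J.col (Fin.last m)) (Fin.snoc d 0)
  have hJ' : ∀ r k, J' r k.castSucc = J r k.castSucc + d k * J r (Fin.last m) := by
    simp [J', vecMulVec_apply, mul_comm]
  have hJ'last : ∀ r, J' r (Fin.last m) = J r (Fin.last m) := by
    simp [J', vecMulVec_apply]
  rw [← det_add_vecMulVec_col_last J d, det_succ_row J' i, Finset.sum_eq_single (Fin.last m)]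
  · rw [hJ'last, Fin.val_last, Fin.succAbove_last]
    congr 2
    ext j k
    exact hJ' _ _
  · intro t _ ht
    obtain ⟨k, rfl⟩ := Fin.exists_castSucc_eq.mpr ht
    rw [hJ', hrow, mul_zero, zero_mul]
  · simp

end Matrix

section

variable {𝕜 : Type*} [NontriviallyNormedField 𝕜] {F : Type*} [NormedAddCommGroup F]
  [NormedSpace 𝕜 F] {m : ℕ} {φ : (Fin m → 𝕜) → 𝕜} {y : Fin m → 𝕜}

theorem HasFDerivAt.finSnoc {φ' : (Fin m → 𝕜) →L[𝕜] 𝕜} (hφ : HasFDerivAt φ φ' y) :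
    HasFDerivAt (fun y' => (Fin.snoc y' (φ y') : Fin (m + 1) → 𝕜))
      (ContinuousLinearMap.pi (Fin.lastCases φ' ContinuousLinearMap.proj)) y := by
  refine hasFDerivAt_pi.mpr fun j => ?_
  induction j using Fin.lastCases with
  | last => simpa using hφ
  | cast q => simpa using hasFDerivAt_apply q y

theorem fderiv_comp_finSnoc_apply_single {g : (Fin (m + 1) → 𝕜) → F}
    (hg : DifferentiableAt 𝕜 g (Fin.snoc y (φ y))) (hφ : DifferentiableAt 𝕜 φ y) (k : Fin m) :
    fderiv 𝕜 (fun y' => g (Fin.snoc y' (φ y'))) y (Pi.single k 1) =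
      fderiv 𝕜 g (Fin.snoc y (φ y)) (Pi.single k.castSucc 1) +
        fderiv 𝕜 φ y (Pi.single k 1) • fderiv 𝕜 g (Fin.snoc y (φ y)) (Pi.single (Fin.last m) 1) := by
  have hcomp : HasFDerivAt (fun y' => g (Fin.snoc y' (φ y'))) _ y :=
    hg.hasFDerivAt.comp y hφ.hasFDerivAt.finSnoc
  rw [hcomp.fderiv, ContinuousLinearMap.comp_apply, ← map_smul, ← map_add]
  congr 1
  ext j
  induction j using Fin.lastCases with
  | last => simp [(Fin.castSucc_lt_last k).ne']
  | cast q => simp [Pi.single_apply, Fin.castSucc_inj, (Fin.castSucc_lt_last q).ne]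

end

theorem ContDiffAt.differentiableAt_curry_right {𝕜 E F G : Type*} [NontriviallyNormedField 𝕜]
    [NormedAddCommGroup E] [NormedSpace 𝕜 E] [NormedAddCommGroup F] [NormedSpace 𝕜 F]
    [NormedAddCommGroup G] [NormedSpace 𝕜 G] {n : WithTop ℕ∞} {f : E → F → G} {a : E} {b : F}
    (hf : ContDiffAt 𝕜 n (fun p : E × F => f p.1 p.2) (a, b)) (hn : n ≠ 0) :
    DifferentiableAt 𝕜 (f a) b :=
  (hf.differentiableAt hn).comp b ((differentiableAt_const a).prodMk differentiableAt_id)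

-- The dependent variables are indexed by `Fin (m + 1)`, so `y_m` is `Fin.last m`, and the
-- components of `f^{[1]}` are listed through `i.succAbove`.
theorem statement11_general (n m : ℕ)
    (f : (Fin n → ℝ) → (Fin (m + 1) → ℝ) → Fin (m + 1) → ℝ)
    (a : Fin n → ℝ) (b : Fin (m + 1) → ℝ)
    (hf : ContDiffAt ℝ 1 (fun p : (Fin n → ℝ) × (Fin (m + 1) → ℝ) => f p.1 p.2) (a, b))
    (i : Fin (m + 1))
    (J : Matrix (Fin (m + 1)) (Fin (m + 1)) ℝ)
    (hJ : ∀ i' j : Fin (m + 1), J i' j = fderiv ℝ (fun y => f a y i') b (Pi.single j 1))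
    (hi : J i (Fin.last m) ≠ 0)
    (h : (Fin n → ℝ) → (Fin m → ℝ) → ℝ)
    (hh : ContDiffAt ℝ 1 (fun p : (Fin n → ℝ) × (Fin m → ℝ) => h p.1 p.2)
      (a, fun k => b k.castSucc))
    (hhb : h a (fun k => b k.castSucc) = b (Fin.last m))
    (hfh : ∀ᶠ p : (Fin n → ℝ) × (Fin m → ℝ) in nhds (a, fun k => b k.castSucc),
      f p.1 (Fin.snoc p.2 (h p.1 p.2)) i = 0)
    (J1 : Matrix (Fin m) (Fin m) ℝ)
    (hJ1 : ∀ j k : Fin m, J1 j k =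
      fderiv ℝ (fun y' : Fin m → ℝ => f a (Fin.snoc y' (h a y')) (i.succAbove j))
        (fun k => b k.castSucc) (Pi.single k 1)) :
    J1.det = ((-1 : ℝ) ^ ((i : ℕ) + m) / J i (Fin.last m)) * J.det ∧
      (J.det ≠ 0 → J1.det ≠ 0) := by
  set b' : Fin m → ℝ := fun k => b k.castSucc
  have hb : Fin.snoc b' (h a b') = b := by rw [hhb]; exact Fin.snoc_init_self b
  set d : Fin m → ℝ := fun k => fderiv ℝ (h a) b' (Pi.single k 1)
  have hchain : ∀ i' k, fderiv ℝ (fun y' => f a (Fin.snoc y' (h a y')) i') b' (Pi.single k 1) =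
      J i' k.castSucc + d k * J i' (Fin.last m) := by
    intro i' k
    have hfa : DifferentiableAt ℝ (fun y => f a y i') (Fin.snoc b' (h a b')) :=
      hb ▸ differentiableAt_pi.mp (hf.differentiableAt_curry_right one_ne_zero) i'
    rw [fderiv_comp_finSnoc_apply_single hfa (hh.differentiableAt_curry_right one_ne_zero), hb,
      hJ, hJ, smul_eq_mul]
  have hrow : ∀ k, J i k.castSucc + d k * J i (Fin.last m) = 0 := by
    intro k
    have hconst : (fun y' => f a (Fin.snoc y' (h a y')) i) =ᶠ[nhds b'] fun _ => 0 :=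
      ((continuous_const.prodMk continuous_id).tendsto b').eventually hfh
    rw [← hchain, hconst.fderiv_eq, fderiv_const_apply, zero_apply]
  have hdet : J.det = (-1) ^ ((i : ℕ) + m) * J i (Fin.last m) * J1.det := by
    rw [Matrix.det_eq_neg_one_pow_mul_mul_det_of_eliminate_last J i d hrow]
    congr 2
    ext j k
    rw [hJ1, hchain, Matrix.of_apply]
  refine ⟨?_, fun hJ0 hJ10 => hJ0 (by rw [hdet, hJ10, mul_zero])⟩
  have hsign : (-1 : ℝ) ^ ((i : ℕ) + m) * (-1) ^ ((i : ℕ) + m) = 1 := by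
    rw [← pow_add, ← two_mul, pow_mul, neg_one_sq, one_pow]
  rw [hdet, div_mul_eq_mul_div, eq_div_iff hi]
  linear_combination (-(J i (Fin.last m) * J1.det)) * hsign

/-- Eliminating the last dependent variable `y_m` using the `i`-th
equation (solved by `h`) multiplies the Jacobian determinant with respect to the
remaining dependent variables by `(−1)^{i+m} / ∂_{y_m} f_i(a,b)`; in particular
non-degeneracy is preserved.  (Here the `m+1` dependent variables are indexed by
`Fin (m+1)`, the last one being `Fin.last m`, and `f^{[1]}` has components
`f_j(x, y', h(x,y'))` for `j ≠ i` in increasing order, via `i.succAbove`.) -/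
theorem statement11 (n m : ℕ)
    (f : (Fin n → ℝ) → (Fin (m + 1) → ℝ) → Fin (m + 1) → ℝ)
    (a : Fin n → ℝ) (b : Fin (m + 1) → ℝ)
    (hf : ContDiffAt ℝ 1 (fun p : (Fin n → ℝ) × (Fin (m + 1) → ℝ) => f p.1 p.2) (a, b))
    (hfab : f a b = 0)
    (i : Fin (m + 1))
    (J : Matrix (Fin (m + 1)) (Fin (m + 1)) ℝ)
    (hJ : ∀ i' j : Fin (m + 1), J i' j = fderiv ℝ (fun y => f a y i') b (Pi.single j 1))
    (hi : J i (Fin.last m) ≠ 0)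
    (h : (Fin n → ℝ) → (Fin m → ℝ) → ℝ)
    (hh : ContDiffAt ℝ 1 (fun p : (Fin n → ℝ) × (Fin m → ℝ) => h p.1 p.2)
      (a, fun k => b k.castSucc))
    (hhb : h a (fun k => b k.castSucc) = b (Fin.last m))
    (hfh : ∀ᶠ p : (Fin n → ℝ) × (Fin m → ℝ) in nhds (a, fun k => b k.castSucc),
      f p.1 (Fin.snoc p.2 (h p.1 p.2)) i = 0)
    (J1 : Matrix (Fin m) (Fin m) ℝ)
    (hJ1 : ∀ j k : Fin m, J1 j k =
      fderiv ℝ (fun y' : Fin m → ℝ => f a (Fin.snoc y' (h a y')) (i.succAbove j))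
        (fun k => b k.castSucc) (Pi.single k 1)) :
    J1.det = ((-1 : ℝ) ^ ((i : ℕ) + m) / J i (Fin.last m)) * J.det ∧
      (J.det ≠ 0 → J1.det ≠ 0) :=
  statement11_general n m f a b hf i J hJ hi h hh hhb hfh J1 hJ1
end

section
/- Suppose that each h_i is continuous and that for every i = m, m−1, …, 1 and every (x, y₁,…,y_{i−1}) ∈ R × I₁×⋯×I_{i−1}, the value h_i(x, y₁,…,y_{i−1}) is the unique z ∈ I_i such that f_i(x, y₁,…,y_{i−1}, z, z_{i+1}, …, z_m) = 0, where z_{i+1},…,z_m are obtained from the recursion z_j = h_j(x, y₁,…,y_{i−1}, z, z_{i+1},…,z_{j−1}) for j = i+1,…,m. Define g : R → I = I₁×⋯×I_m by g₁(x) = h₁(x), g₂(x) = h₂(x, g₁(x)), …, g_m(x) = h_m(x, g₁(x),…,g_{m−1}(x)). Then g is continuous, f(x, g(x)) = 0 for every x ∈ R, and g is the unique function from R to I satisfying f(x, g(x)) = 0 for every x ∈ R. -/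
open Set

/-!
The recursion defining `g` computes, for each `x`, the unique fixed point of the lower
triangular system `y j = h j x y`. Fixed points of such a system are unique and inherit
continuity in `x` from the `h j` by strong induction on `j`. A point of the box is a root
of `f x` exactly when it solves the system, by downward induction on `j`: once `y k = h k x y`
for all `k > j`, the recursion started at `j + 1` reproduces `y`, so the defining property of
`h j` reads `f x y j = 0 ↔ y j = h j x y`.
-/

/-- Starting from the vector `y`, successively overwrite the coordinates
`i, i+1, …` (as long as fuel remains and the index is `< m`) by the values prescribed
by the family of functions `h`; `fillAux h x (m - i) i y` is the vector
`(y₁, …, y_{i-1}, z_i, …, z_m)` with `z_j = h_j (x, y₁, …, y_{i-1}, z_i, …, z_{j-1})`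
(each `h j` is assumed to depend only on the coordinates before `j`). -/
def fillAux {n m : ℕ} (h : Fin m → (Fin n → ℝ) → (Fin m → ℝ) → ℝ) (x : Fin n → ℝ) :
    ℕ → ℕ → (Fin m → ℝ) → Fin m → ℝ
  | 0, _, y => y
  | fuel + 1, i, y =>
    if hi : i < m then
      fillAux h x fuel (i + 1) (Function.update y ⟨i, hi⟩ (h ⟨i, hi⟩ x y))
    else y

def IsLowerTriangular {ι X β : Type*} [LT ι] (h : ι → X → (ι → β) → β) : Prop :=
  ∀ i x (y y' : ι → β), (∀ j, j < i → y j = y' j) → h i x y = h i x y'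

section FixedPoint

variable {ι X β : Type*} [Preorder ι] [WellFoundedLT ι] {h : ι → X → (ι → β) → β}

theorem IsLowerTriangular.eq_of_isFixed (hh : IsLowerTriangular h) {x : X} {y y' : ι → β}
    (hy : ∀ j, y j = h j x y) (hy' : ∀ j, y' j = h j x y') : y = y' := by
  funext j
  induction j using WellFoundedLT.induction with
  | _ j ih => rw [hy, hy', hh j x y y' ih]

theorem forall_mem_of_isFixed {S : ι → Set β} {x : X} {y : ι → β}
    (hmaps : ∀ j (z : ι → β), (∀ k, k < j → z k ∈ S k) → h j x z ∈ S j)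
    (hy : ∀ j, y j = h j x y) (j : ι) : y j ∈ S j := by
  induction j using WellFoundedLT.induction with
  | _ j ih => exact hy j ▸ hmaps j y ih

theorem IsLowerTriangular.continuousOn_of_isFixed [TopologicalSpace X] [TopologicalSpace β]
    (hh : IsLowerTriangular h) {s : Set X} {S : ι → Set β}
    (hcont : ∀ j, ContinuousOn (fun p : X × (ι → β) => h j p.1 p.2) (s ×ˢ univ.pi S))
    {g : X → ι → β} (hgS : ∀ x ∈ s, ∀ j, g x j ∈ S j) (hg : ∀ x ∈ s, ∀ j, g x j = h j x (g x)) :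
    ContinuousOn g s := by
  classical
  intro x₀ hx₀
  refine continuousWithinAt_pi.2 fun j => ?_
  induction j using WellFoundedLT.induction with
  | _ j ih =>
    -- Freeze the coordinates `≥ j` at their value at `x₀`; `h j` does not see them.
    set w : X → ι → β := fun x k => if k < j then g x k else g x₀ k
    have hw : ContinuousWithinAt w s x₀ := continuousWithinAt_pi.2 fun k => by
      by_cases hk : k < j
      · simpa only [w, if_pos hk] using ih k hk
      · simpa only [w, if_neg hk] using continuousWithinAt_const
    have hwS : MapsTo (fun x => (x, w x)) s (s ×ˢ univ.pi S) := fun x hx =>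
      ⟨hx, fun k _ => by dsimp only [w]; split_ifs <;> apply hgS <;> assumption⟩
    have hw₀ : w x₀ = g x₀ := funext fun k => by simp only [w, ite_self]
    have hgw : ∀ x ∈ s, g x j = h j x (w x) := fun x hx =>
      (hg x hx j).trans (hh j x _ _ fun k hk => by simp only [w, if_pos hk])
    have hcomp := ((hcont j).continuousWithinAt (hwS hx₀)).comp
      (f := fun x => (x, w x)) (continuousWithinAt_id.prodMk hw) hwS
    exact hcomp.congr hgw (by simpa only [Function.comp_apply, hw₀] using hg x₀ hx₀ j)

end FixedPoint

section FillAux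

variable {n m : ℕ} {h : Fin m → (Fin n → ℝ) → (Fin m → ℝ) → ℝ} {x : Fin n → ℝ}

theorem fillAux_apply_of_lt (fuel i : ℕ) (y : Fin m → ℝ) {j : Fin m} (hj : (j : ℕ) < i) :
    fillAux h x fuel i y j = y j := by
  induction fuel generalizing i y with
  | zero => rfl
  | succ fuel ih =>
    rw [fillAux]
    split_ifs
    · rw [ih _ _ (by omega), Function.update_of_ne (Fin.ne_of_val_ne (by simp; omega))]
    · rfl

theorem fillAux_eq_self (fuel i : ℕ) {y : Fin m → ℝ}
    (hy : ∀ j : Fin m, i ≤ (j : ℕ) → y j = h j x y) : fillAux h x fuel i y = y := by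
  induction fuel generalizing i with
  | zero => rfl
  | succ fuel ih =>
    rw [fillAux]
    split_ifs with him
    · rw [← hy ⟨i, him⟩ le_rfl, Function.update_eq_self]
      exact ih (i + 1) fun j hj => hy j (by omega)
    · rfl

theorem fillAux_apply_of_le (hh : IsLowerTriangular h) (fuel i : ℕ) (y : Fin m → ℝ)
    (hfuel : m ≤ i + fuel) {j : Fin m} (hij : i ≤ (j : ℕ)) :
    fillAux h x fuel i y j = h j x (fillAux h x fuel i y) := by
  induction fuel generalizing i y with
  | zero => omega
  | succ fuel ih =>
    have him : i < m := by omega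
    rw [fillAux, dif_pos him]
    obtain hij | rfl : i + 1 ≤ (j : ℕ) ∨ j = ⟨i, him⟩ := by
      rcases Nat.lt_or_eq_of_le hij with hij | hij
      · exact .inl hij
      · exact .inr (Fin.ext hij.symm)
    · exact ih (i + 1) _ (by omega) hij
    · rw [fillAux_apply_of_lt _ _ _ (Nat.lt_succ_self i), Function.update_self]
      refine hh _ x _ _ fun k hk => ?_
      rw [fillAux_apply_of_lt _ _ _ (Nat.lt_succ_of_lt hk),
        Function.update_of_ne (Fin.ne_of_lt hk)]

theorem fillAux_isFixed (hh : IsLowerTriangular h) (y : Fin m → ℝ) (j : Fin m) :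
    fillAux h x m 0 y j = h j x (fillAux h x m 0 y) :=
  fillAux_apply_of_le hh m 0 y (by omega) (Nat.zero_le _)

theorem fillAux_succ_update_self {y : Fin m → ℝ} {j : Fin m}
    (hy : ∀ k, j < k → y k = h k x y) (fuel : ℕ) :
    fillAux h x fuel (j + 1) (Function.update y j (y j)) = y := by
  rw [Function.update_eq_self]
  exact fillAux_eq_self fuel _ hy

end FillAux

theorem statement12_general (n m : ℕ) (ξ η : Fin n → ℝ)
    (lo hi : Fin m → ℝ)
    (f : (Fin n → ℝ) → (Fin m → ℝ) → Fin m → ℝ)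
    (h : Fin m → (Fin n → ℝ) → (Fin m → ℝ) → ℝ)
    (hdep : ∀ (i : Fin m) (x : Fin n → ℝ) (y y' : Fin m → ℝ),
      (∀ j : Fin m, (j : ℕ) < (i : ℕ) → y j = y' j) → h i x y = h i x y')
    (hcont : ∀ i : Fin m,
      ContinuousOn (fun p : (Fin n → ℝ) × (Fin m → ℝ) => h i p.1 p.2) (Icc ξ η ×ˢ Icc lo hi))
    (huniq : ∀ i : Fin m, ∀ x ∈ Icc ξ η, ∀ y : Fin m → ℝ,
      (∀ j : Fin m, (j : ℕ) < (i : ℕ) → y j ∈ Icc (lo j) (hi j)) →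
      h i x y ∈ Icc (lo i) (hi i) ∧
        ∀ z ∈ Icc (lo i) (hi i),
          (f x (fillAux h x (m - ((i : ℕ) + 1)) ((i : ℕ) + 1) (Function.update y i z)) i = 0 ↔
            z = h i x y)) :
    ContinuousOn (fun x => fillAux h x m 0 fun _ => 0) (Icc ξ η) ∧
    (∀ x ∈ Icc ξ η,
      (fillAux h x m 0 fun _ => 0) ∈ Icc lo hi ∧ f x (fillAux h x m 0 fun _ => 0) = 0) ∧
    ∀ g' : (Fin n → ℝ) → Fin m → ℝ,
      (∀ x ∈ Icc ξ η, g' x ∈ Icc lo hi ∧ f x (g' x) = 0) →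
      ∀ x ∈ Icc ξ η, g' x = fillAux h x m 0 fun _ => 0 := by
  have hh : IsLowerTriangular h := hdep
  have mem_box {y : Fin m → ℝ} : y ∈ Icc lo hi ↔ ∀ k, y k ∈ Icc (lo k) (hi k) := by
    rw [← pi_univ_Icc, mem_univ_pi]
  set g := fun x => fillAux h x m 0 fun _ => 0
  have hg : ∀ x j, g x j = h j x (g x) := fun x => fillAux_isFixed hh _
  have hgI : ∀ x ∈ Icc ξ η, ∀ j, g x j ∈ Icc (lo j) (hi j) := fun x hx =>
    forall_mem_of_isFixed (fun j z hz => (huniq j x hx z hz).1) (hg x)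
  have root_iff {x} (hx : x ∈ Icc ξ η) {y} (hy : y ∈ Icc lo hi) {j : Fin m}
      (hfix : ∀ k, j < k → y k = h k x y) : f x y j = 0 ↔ y j = h j x y := by
    have := (huniq j x hx y fun k _ => mem_box.1 hy k).2 (y j) (mem_box.1 hy j)
    rwa [fillAux_succ_update_self hfix] at this
  refine ⟨?_, fun x hx => ⟨mem_box.2 (hgI x hx), ?_⟩, fun g' hg' x hx => ?_⟩
  · rw [← pi_univ_Icc lo hi] at hcont
    exact hh.continuousOn_of_isFixed hcont hgI fun x _ => hg x
  · exact funext fun j => (root_iff hx (mem_box.2 (hgI x hx)) fun k _ => hg x k).2 (hg x j)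
  · obtain ⟨hg'I, hg'root⟩ := hg' x hx
    have hg'fix : ∀ j, g' x j = h j x (g' x) := fun j => by
      induction j using WellFoundedGT.induction with
      | _ j ih => exact (root_iff hx hg'I ih).1 (congrFun hg'root j)
    exact hh.eq_of_isFixed hg'fix (hg x)

/-- If each `h i` is continuous and, for every `i` and every
`(x, y₁,…,y_{i−1}) ∈ R × I₁×⋯×I_{i−1}`, the value `h i (x, y₁,…,y_{i−1})` is the unique
`z ∈ I_i` with `f_i(x, y₁,…,y_{i−1}, z, z_{i+1},…,z_m) = 0` (the later `z_j` obtained by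
the recursion), then `g` defined by `g₁ = h₁(x)`, `g₂ = h₂(x, g₁)`, …,
`g_m = h_m(x, g₁,…,g_{m−1})` is continuous, satisfies `f(x, g x) = 0` on `R`, and is the
unique function from `R` to `I` doing so. -/
theorem statement12 (n m : ℕ) (ξ η : Fin n → ℝ) (hξη : ∀ k, ξ k ≤ η k)
    (lo hi : Fin m → ℝ) (hI : ∀ i, lo i ≤ hi i)
    (f : (Fin n → ℝ) → (Fin m → ℝ) → Fin m → ℝ)
    (hf : Continuous fun p : (Fin n → ℝ) × (Fin m → ℝ) => f p.1 p.2)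
    (h : Fin m → (Fin n → ℝ) → (Fin m → ℝ) → ℝ)
    (hdep : ∀ (i : Fin m) (x : Fin n → ℝ) (y y' : Fin m → ℝ),
      (∀ j : Fin m, (j : ℕ) < (i : ℕ) → y j = y' j) → h i x y = h i x y')
    (hcont : ∀ i : Fin m,
      ContinuousOn (fun p : (Fin n → ℝ) × (Fin m → ℝ) => h i p.1 p.2) (Icc ξ η ×ˢ Icc lo hi))
    (huniq : ∀ i : Fin m, ∀ x ∈ Icc ξ η, ∀ y : Fin m → ℝ,
      (∀ j : Fin m, (j : ℕ) < (i : ℕ) → y j ∈ Icc (lo j) (hi j)) →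
      h i x y ∈ Icc (lo i) (hi i) ∧
        ∀ z ∈ Icc (lo i) (hi i),
          (f x (fillAux h x (m - ((i : ℕ) + 1)) ((i : ℕ) + 1) (Function.update y i z)) i = 0 ↔
            z = h i x y)) :
    ContinuousOn (fun x => fillAux h x m 0 fun _ => 0) (Icc ξ η) ∧
    (∀ x ∈ Icc ξ η,
      (fillAux h x m 0 fun _ => 0) ∈ Icc lo hi ∧ f x (fillAux h x m 0 fun _ => 0) = 0) ∧
    ∀ g' : (Fin n → ℝ) → Fin m → ℝ,
      (∀ x ∈ Icc ξ η, g' x ∈ Icc lo hi ∧ f x (g' x) = 0) →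
      ∀ x ∈ Icc ξ η, g' x = fillAux h x m 0 fun _ => 0 :=
  statement12_general n m ξ η lo hi f h hdep hcont huniq
end
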